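/- arXiv:math/0506578 — 3 statements merged into one kernel-verified Lean document; each statement's English description precedes it below -/
import Mathlib

section
/- Fix n > 1, let r ≤ n, and let i₁ < i₂ < ⋯ < i_r be integers with 1 ≤ i₁ and i_r ≤ n. Then the subspace span(φ_{i₁}(V(n)) ∪ ⋯ ∪ φ_{i_r}(V(n))) of W(n) has dimension r·C(n,2) − C(r,3). -/
/-!
For `S = {i₁, …, i_r}`, the span `U` of the `φ_k(V(n))`, `k ∈ S`, splits along the multisets
`{i, j, k}` of indices. A coordinate `w[j,i,k]` with a repeated index lies in `U` exactly when
the repeated index is in `S`. For `a < b < c` the block is two-dimensional, spanned by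
`w[c,a,b]` and `w[b,a,c]`, and the three candidate generators are
`φ_a(v[c,b]) = w[c,a,b] - w[b,a,c]`, `φ_b(v[c,a]) = w[c,a,b]` and `φ_c(v[b,a]) = w[b,a,c]`:
they contribute `min(|S ∩ {a,b,c}|, 2)`, so exactly one dimension is lost for each triple
inside `S`.

Concretely, `U` has a basis in reduced echelon form whose pivots are the coordinates
`w[j,i,k]` with `k ∈ S ∨ i ∈ S ∧ (j ∈ S ∨ k < j)`, and these pivots are in bijection with the
triples `(s, i, j)`, `s ∈ S`, `i < j`, other than the increasing triples of elements of `S`.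
-/

open Submodule

/-- Index type for the distinguished basis of `V(n)`: pairs `(j,i)` with `i < j`. -/
abbrev VIdx (n : ℕ) := {q : Fin n × Fin n // q.2 < q.1}

/-- Index type for the distinguished basis of `W(n)`: triples `(j,i,k)` with `i < j`, `i ≤ k`. -/
abbrev WIdx (n : ℕ) := {t : Fin n × Fin n × Fin n // t.2.1 < t.1 ∧ t.2.1 ≤ t.2.2}

/-- The vector space `V(n)` over `F`. -/
abbrev V (F : Type*) [Field F] (n : ℕ) := VIdx n → F

/-- The vector space `W(n)` over `F`. -/
abbrev W (F : Type*) [Field F] (n : ℕ) := WIdx n → F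

variable (F : Type*) [Field F] (n : ℕ)

/-- The vector `v[j,i]`, with the conventions `v[i,j] = -v[j,i]` and `v[i,i] = 0`. -/
noncomputable def v (j i : Fin n) : V F n :=
  if h : i < j then Pi.single (⟨(j, i), h⟩ : VIdx n) 1
  else if h' : j < i then -Pi.single (⟨(i, j), h'⟩ : VIdx n) 1
  else 0

/-- The vector `w[j,i,k]` (the basis vector when `i < j` and `i ≤ k`, zero otherwise). -/
noncomputable def w (j i k : Fin n) : W F n :=
  if h : i < j ∧ i ≤ k then Pi.single (⟨(j, i, k), h⟩ : WIdx n) 1 else 0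

/-- The linear map `φ_k : V(n) → W(n)` determined on basis vectors by
`φ_k(v[j,i]) = w[j,i,k]` if `i ≤ k`, and `φ_k(v[j,i]) = w[j,k,i] - w[i,k,j]` if `k < i`. -/
noncomputable def phi (k : Fin n) : V F n →ₗ[F] W F n :=
  (Pi.basisFun F (VIdx n)).constr F fun q =>
    if q.1.2 ≤ k then w F n q.1.1 q.1.2 k
    else w F n q.1.1 k q.1.2 - w F n q.1.2 k q.1.1

/-- The linear map `Φ_n : V(n)ⁿ → W(n)`, `Φ_n(x₁,…,x_n) = φ₁(x₁) + ⋯ + φ_n(x_n)`. -/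
noncomputable def Phi : (Fin n → V F n) →ₗ[F] W F n :=
  ∑ k : Fin n, (phi F n k).comp (LinearMap.proj k)

/-- For `X ≤ V(n)`, the subspace `X* ≤ W(n)`: the span of `φ₁(X) ∪ ⋯ ∪ φ_n(X)`. -/
noncomputable def starV (X : Submodule F (V F n)) : Submodule F (W F n) :=
  ⨆ k : Fin n, X.map (phi F n k)

/-- For `Y ≤ W(n)`, the subspace `Y* ≤ V(n)`: the intersection `⋂ₖ φ_k⁻¹(Y)`. -/
noncomputable def starW (Y : Submodule F (W F n)) : Submodule F (V F n) :=
  ⨅ k : Fin n, Y.comap (phi F n k)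

open Finset

section Counting

variable {α : Type*} [LinearOrder α] [Fintype α]

theorem natCard_fin_orderEmbedding (k : ℕ) :
    Nat.card (Fin k ↪o α) = (Fintype.card α).choose k := by
  rw [Nat.card_congr Set.powersetCard.ofFinEmbEquiv, Set.powersetCard.card,
    Nat.card_eq_fintype_card]

theorem card_filter_lt : #{q : α × α | q.1 < q.2} = (Fintype.card α).choose 2 := by
  rw [← natCard_fin_orderEmbedding, ← Fintype.card_subtype, ← Nat.card_eq_fintype_card]
  refine Nat.card_congr
    { toFun := fun q => OrderEmbedding.ofStrictMono ![q.1.1, q.1.2] ?_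
      invFun := fun f => ⟨(f 0, f 1), f.strictMono (by decide)⟩
      left_inv := fun q => rfl
      right_inv := fun f => by ext i; fin_cases i <;> rfl }
  rw [Fin.strictMono_iff_lt_succ]
  simpa [Fin.forall_fin_one] using q.2

theorem card_filter_mem_lt_lt (S : Finset α) :
    #{t : α × α × α | t.1 ∈ S ∧ t.2.1 ∈ S ∧ t.2.2 ∈ S ∧ t.1 < t.2.1 ∧ t.2.1 < t.2.2} =
      (#S).choose 3 := by
  rw [← Fintype.card_coe S, ← natCard_fin_orderEmbedding, ← Fintype.card_subtype,
    ← Nat.card_eq_fintype_card]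
  refine Nat.card_congr
    { toFun := fun t => OrderEmbedding.ofStrictMono
        ![⟨t.1.1, t.2.1⟩, ⟨t.1.2.1, t.2.2.1⟩, ⟨t.1.2.2, t.2.2.2.1⟩] ?_
      invFun := fun f => ⟨((f 0 : α), (f 1 : α), (f 2 : α)), (f 0).2, (f 1).2, (f 2).2,
        f.strictMono (by decide), f.strictMono (by decide)⟩
      left_inv := fun t => rfl
      right_inv := fun f => by ext i; fin_cases i <;> rfl }
  rw [Fin.strictMono_iff_lt_succ]
  simpa [Fin.forall_fin_two] using t.2.2.2.2

theorem card_filter_mem_lt_and_not_lt_lt (S : Finset α) :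
    #{t : α × α × α | t.1 ∈ S ∧ t.2.1 < t.2.2 ∧ ¬(t.1 < t.2.1 ∧ t.2.1 ∈ S ∧ t.2.2 ∈ S)} =
      #S * (Fintype.card α).choose 2 - (#S).choose 3 := by
  have hall : #{t : α × α × α | t.1 ∈ S ∧ t.2.1 < t.2.2} = #S * (Fintype.card α).choose 2 := by
    rw [← card_filter_lt, ← card_product]
    congr 1
    ext
    simp
  have hin : #{t : α × α × α | t.1 ∈ S ∧ t.2.1 < t.2.2 ∧ t.1 < t.2.1 ∧ t.2.1 ∈ S ∧ t.2.2 ∈ S} =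
      (#S).choose 3 := by
    rw [← card_filter_mem_lt_lt S]
    congr 1
    ext
    simp only [mem_filter, mem_univ, true_and]
    tauto
  have hsplit := card_filter_add_card_filter_not (s := {t : α × α × α | t.1 ∈ S ∧ t.2.1 < t.2.2})
    fun t => t.1 < t.2.1 ∧ t.2.1 ∈ S ∧ t.2.2 ∈ S
  simp only [filter_filter, and_assoc] at hsplit
  omega

end Counting

variable {F n}

theorem v_of_lt {i j : Fin n} (h : i < j) : v F n j i = Pi.single ⟨(j, i), h⟩ 1 := dif_pos h

theorem w_apply (j i k : Fin n) (y : WIdx n) :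
    w F n j i k y = if y.1 = (j, i, k) then 1 else 0 := by
  by_cases h : i < j ∧ i ≤ k
  · simp [w, h, Pi.single_apply, Subtype.ext_iff]
  · have hy : y.1 ≠ (j, i, k) := fun hy => h (by simpa [hy] using y.2)
    rw [w, dif_neg h, if_neg hy]
    rfl

theorem phi_v_of_le {i j k : Fin n} (hij : i < j) (hik : i ≤ k) :
    phi F n k (v F n j i) = w F n j i k := by
  rw [v_of_lt hij, ← Pi.basisFun_apply, phi, Module.Basis.constr_basis]
  exact if_pos hik

theorem phi_v_of_lt {i j k : Fin n} (hij : i < j) (hki : k < i) :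
    phi F n k (v F n j i) = w F n j k i - w F n i k j := by
  rw [v_of_lt hij, ← Pi.basisFun_apply, phi, Module.Basis.constr_basis]
  exact if_neg hki.not_ge

theorem range_phi_le_iff {k : Fin n} {M : Submodule F (W F n)} :
    LinearMap.range (phi F n k) ≤ M ↔ ∀ j i, i < j → phi F n k (v F n j i) ∈ M := by
  refine ⟨fun h j i _ => h (LinearMap.mem_range_self _ _), fun h => ?_⟩
  rw [LinearMap.range_eq_map, ← (Pi.basisFun F (VIdx n)).span_eq, map_span, span_le]
  rintro _ ⟨_, ⟨q, rfl⟩, rfl⟩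
  simpa [v_of_lt q.2] using h q.1.1 q.1.2 q.2

namespace Echelon

variable (S : Finset (Fin n))

def IsPivot (j i k : Fin n) : Prop := k ∈ S ∨ i ∈ S ∧ (j ∈ S ∨ k < j)

instance (j i k : Fin n) : Decidable (IsPivot S j i k) := by
  unfold IsPivot; infer_instance

abbrev Pivot := {x : WIdx n // IsPivot S x.1.1 x.1.2.1 x.1.2.2}

variable (F) in
/-- When `j, k ∉ S`, the extra entry `w[k,i,j]` is not a pivot, so these vectors are in reduced
echelon form. -/
noncomputable def vec (j i k : Fin n) : W F n :=
  if j ∈ S ∨ k ∈ S then w F n j i k else w F n j i k - w F n k i j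

variable (F) in
noncomputable def family (x : Pivot S) : W F n := vec F S x.1.1.1 x.1.1.2.1 x.1.1.2.2

theorem vec_apply_pivot {j i k : Fin n} (hx : IsPivot S j i k) (y : Pivot S) :
    vec F S j i k y.1 = if y.1.1 = (j, i, k) then 1 else 0 := by
  obtain ⟨⟨⟨a, b, c⟩, -⟩, hy⟩ := y
  unfold vec
  split_ifs with h <;> simp only [Pi.sub_apply, w_apply] <;> grind [IsPivot]

theorem linearIndependent_family : LinearIndependent F (family F S) := by
  refine LinearIndependent.of_comp (LinearMap.funLeft F F (Subtype.val : Pivot S → WIdx n)) ?_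
  convert (Pi.basisFun F (Pivot S)).linearIndependent
  ext x y
  simp [family, vec_apply_pivot S x.2 y, Pi.single_apply, Subtype.ext_iff, eq_comm]

theorem vec_mem_iSup_range_phi {i j k : Fin n} (hij : i < j) (hik : i ≤ k)
    (hp : IsPivot S j i k) : vec F S j i k ∈ ⨆ k ∈ S, LinearMap.range (phi F n k) := by
  have mem : ∀ {k}, k ∈ S → ∀ j i, phi F n k (v F n j i) ∈ ⨆ k ∈ S, LinearMap.range (phi F n k) :=
    fun hk j i => le_biSup (fun k => LinearMap.range (phi F n k)) hk (LinearMap.mem_range_self _ _)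
  by_cases hk : k ∈ S
  · rw [vec, if_pos (Or.inr hk), ← phi_v_of_le hij hik]
    exact mem hk j i
  obtain ⟨hi, hjk⟩ : i ∈ S ∧ (j ∈ S ∨ k < j) := hp.resolve_left hk
  have hik : i < k := hik.lt_of_ne (by rintro rfl; exact hk hi)
  by_cases hj : j ∈ S
  · rw [vec, if_pos (Or.inl hj)]
    rcases lt_or_gt_of_ne (show k ≠ j by rintro rfl; exact hk hj) with hkj | hjk
    · have : w F n j i k = phi F n i (v F n j k) + phi F n j (v F n k i) := by
        rw [phi_v_of_lt hkj hik, phi_v_of_le hik hij.le]; abel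
      exact this ▸ add_mem (mem hi j k) (mem hj k i)
    · have : w F n j i k = phi F n j (v F n k i) - phi F n i (v F n k j) := by
        rw [phi_v_of_le hik hij.le, phi_v_of_lt hjk hij]; abel
      exact this ▸ sub_mem (mem hj k i) (mem hi k j)
  · rw [vec, if_neg (by tauto), ← phi_v_of_lt (hjk.resolve_left hj) hik]
    exact mem hi j k

theorem phi_v_mem_span_family {i j k : Fin n} (hk : k ∈ S) (hij : i < j) :
    phi F n k (v F n j i) ∈ span F (Set.range (family F S)) := by
  have mem : ∀ {j i k} (h : i < j ∧ i ≤ k) (hp : IsPivot S j i k),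
      vec F S j i k ∈ span F (Set.range (family F S)) :=
    fun h hp => subset_span ⟨⟨⟨(_, _, _), h⟩, hp⟩, rfl⟩
  rcases le_or_gt i k with hik | hki
  · have h : vec F S j i k = w F n j i k := if_pos (Or.inr hk)
    rw [phi_v_of_le hij hik, ← h]
    exact mem ⟨hij, hik⟩ (Or.inl hk)
  rw [phi_v_of_lt hij hki]
  by_cases h : i ∈ S ∨ j ∈ S
  · have h₁ : vec F S j k i = w F n j k i := if_pos h.symm
    have h₂ : vec F S i k j = w F n i k j := if_pos h
    exact h₁ ▸ h₂ ▸ sub_mem (mem ⟨hki.trans hij, hki.le⟩ (Or.inr ⟨hk, Or.inr hij⟩))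
      (mem ⟨hki, (hki.trans hij).le⟩ (by unfold IsPivot; tauto))
  · have h₁ : vec F S j k i = w F n j k i - w F n i k j := if_neg (by tauto)
    exact h₁ ▸ mem ⟨hki.trans hij, hki.le⟩ (Or.inr ⟨hk, Or.inr hij⟩)

theorem span_family : span F (Set.range (family F S)) = ⨆ k ∈ S, LinearMap.range (phi F n k) :=
  le_antisymm
    (span_le.2 <| Set.range_subset_iff.2 fun x => vec_mem_iSup_range_phi S x.1.2.1 x.1.2.2 x.2)
    (iSup₂_le fun _ hk => range_phi_le_iff.2 fun _ _ hij => phi_v_mem_span_family S hk hij)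

theorem card_pivot : Fintype.card (Pivot S) = #S * n.choose 2 - (#S).choose 3 := by
  have hsub : Fintype.card (Pivot S) =
      #{t : Fin n × Fin n × Fin n | (t.2.1 < t.1 ∧ t.2.1 ≤ t.2.2) ∧ IsPivot S t.1 t.2.1 t.2.2} := by
    rw [← Fintype.card_subtype]
    exact Fintype.card_congr (Equiv.subtypeSubtypeEquivSubtypeInter
      (fun t : Fin n × Fin n × Fin n => t.2.1 < t.1 ∧ t.2.1 ≤ t.2.2)
      fun t => IsPivot S t.1 t.2.1 t.2.2)
  have hcount := card_filter_mem_lt_and_not_lt_lt S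
  rw [Fintype.card_fin] at hcount
  rw [hsub, ← hcount]
  -- `(j, i, k) ↦ (k, i, j)` if `k ∈ S`, and `(i, min j k, max j k)` otherwise
  apply card_nbij'
    (fun ⟨j, i, k⟩ => if k ∈ S then (k, i, j) else if k < j then (i, k, j) else (i, j, k))
    (fun ⟨s, i, j⟩ => if i ≤ s then (j, i, s) else if i ∈ S then (i, s, j) else (j, s, i))
  all_goals
    rintro ⟨a, b, c⟩
    simp only [coe_filter, Set.mem_ofPred_eq, mem_univ, true_and, IsPivot]
    grind

end Echelon

theorem finrank_iSup_range_phi (S : Finset (Fin n)) :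
    Module.finrank F ↥(⨆ k ∈ S, LinearMap.range (phi F n k)) =
      #S * n.choose 2 - (#S).choose 3 := by
  rw [← Echelon.span_family, finrank_span_eq_card (Echelon.linearIndependent_family S),
    Echelon.card_pivot]

theorem statement4_general (p : ℕ) [Fact p.Prime] (n : ℕ)
    (r : ℕ) (ι : Fin r → Fin n) (hι : StrictMono ι) :
    Module.finrank (ZMod p)
        ↥(⨆ t : Fin r, LinearMap.range (phi (ZMod p) n (ι t))) =
      r * n.choose 2 - r.choose 3 := by
  have hS : #(univ.image ι) = r := by
    rw [card_image_of_injective _ hι.injective, card_univ, Fintype.card_fin]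
  have hU : ⨆ t, LinearMap.range (phi (ZMod p) n (ι t)) =
      ⨆ k ∈ univ.image ι, LinearMap.range (phi (ZMod p) n k) := by
    simp only [iSup_finset_image, mem_univ, iSup_pos]
  rw [hU, finrank_iSup_range_phi, hS]

/-- Let `i₁ < i₂ < ⋯ < i_r` be indices in `{1,…,n}` (given by a strictly monotone
`ι : Fin r → Fin n`).  Then `span(φ_{i₁}(V(n)) ∪ ⋯ ∪ φ_{i_r}(V(n)))` has dimension
`r·C(n,2) − C(r,3)`. -/
theorem statement4 (p : ℕ) [Fact p.Prime] (hp2 : p ≠ 2) (n : ℕ) (hn : 1 < n)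
    (r : ℕ) (hr : r ≤ n) (hr1 : 1 ≤ r) (ι : Fin r → Fin n) (hι : StrictMono ι) :
    Module.finrank (ZMod p)
        ↥(⨆ t : Fin r, LinearMap.range (phi (ZMod p) n (ι t))) =
      r * n.choose 2 - r.choose 3 :=
  statement4_general p n r ι hι
end

section
/- Let k be a positive integer of the form k = 3ℓ or k = 3ℓ+2 with ℓ ≥ 1, or k = 3ℓ+1 with ℓ ≥ 2 (that is, k ≥ 3 and k ≠ 4), and let n ≥ k. Then there exists an element (x₁, …, x_n) ∈ ker(Φ_n) such that the subspace of V(n) spanned by x₁, …, x_n has dimension exactly k. -/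
open Submodule

variable (F : Type*) [Field F] (n : ℕ)

-- auxiliary definitions

/-- total version of basis vectors of V, indexed by naturals -/
noncomputable def vn (a b : ℕ) : V F n :=
  if h : b < a ∧ a < n then
    Pi.single (⟨(⟨a, h.2⟩, ⟨b, h.1.trans h.2⟩), h.1⟩ : VIdx n) 1 else 0

lemma vn_eval (a b : ℕ) (q : VIdx n) :
    vn F n a b q = if b < a ∧ a < n ∧ (q.1.1 : ℕ) = a ∧ (q.1.2 : ℕ) = b then 1 else 0 := by
  rw [vn]
  split_ifs with h1 h2 h2
  · rw [Pi.single_apply, if_pos]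
    exact Subtype.ext (Prod.ext (Fin.ext h2.2.2.1) (Fin.ext h2.2.2.2))
  · rw [Pi.single_apply, if_neg]
    intro hq
    have h3 := Prod.ext_iff.mp (Subtype.ext_iff.mp hq)
    exact h2 ⟨h1.1, h1.2, Fin.ext_iff.mp h3.1, Fin.ext_iff.mp h3.2⟩
  · exact absurd ⟨h2.1, h2.2.1⟩ h1
  · rfl

lemma phi_single (kk : Fin n) (q : VIdx n) :
    phi F n kk (Pi.single q 1) =
      if q.1.2 ≤ kk then w F n q.1.1 q.1.2 kk
      else w F n q.1.1 kk q.1.2 - w F n q.1.2 kk q.1.1 := by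
  rw [phi, ← Pi.basisFun_apply F (VIdx n) q, Module.Basis.constr_basis]

lemma phi_vn (kk : Fin n) (a b : ℕ) (hb : b < a) (ha : a < n) :
    phi F n kk (vn F n a b) =
      if b ≤ kk.val then w F n ⟨a, ha⟩ ⟨b, hb.trans ha⟩ kk
      else w F n ⟨a, ha⟩ kk ⟨b, hb.trans ha⟩ - w F n ⟨b, hb.trans ha⟩ kk ⟨a, ha⟩ := by
  rw [vn, dif_pos ⟨hb, ha⟩, phi_single]
  rfl

/-- the basic kernel element: a triple supported at indices a, a+1, a+2 -/
noncomputable def trip (a : ℕ) (s : Fin n) : V F n :=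
  if s.val = a then vn F n (a+2) (a+1)
  else if s.val = a + 1 then -vn F n (a+2) a
  else if s.val = a + 2 then vn F n (a+1) a
  else 0

lemma Phi_apply (x : Fin n → V F n) : Phi F n x = ∑ kk : Fin n, phi F n kk (x kk) := by
  rw [Phi, LinearMap.sum_apply]
  rfl

lemma trip_ker (a : ℕ) (h : a + 2 < n) : Phi F n (trip F n a) = 0 := by
  rw [Phi_apply]
  have h0 : a < n := by omega
  have h1 : a + 1 < n := by omega
  rw [← Finset.sum_subset (Finset.subset_univ
      ({⟨a, h0⟩, ⟨a+1, h1⟩, ⟨a+2, h⟩} : Finset (Fin n)))]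
  · have hm1 : (⟨a, h0⟩ : Fin n) ∉ ({⟨a+1, h1⟩, ⟨a+2, h⟩} : Finset (Fin n)) := by
      simp [Fin.ext_iff]
    have hm2 : (⟨a+1, h1⟩ : Fin n) ∉ ({⟨a+2, h⟩} : Finset (Fin n)) := by
      simp [Fin.ext_iff]
    rw [Finset.sum_insert hm1, Finset.sum_insert hm2, Finset.sum_singleton]
    have e1 : trip F n a ⟨a, h0⟩ = vn F n (a+2) (a+1) := by
      simp [trip]
    have e2 : trip F n a ⟨a+1, h1⟩ = -vn F n (a+2) a := by
      simp [trip]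
    have e3 : trip F n a ⟨a+2, h⟩ = vn F n (a+1) a := by
      simp [trip]
    rw [e1, e2, e3, map_neg, phi_vn F n _ _ _ (by omega) h, phi_vn F n _ _ _ (by omega) h,
      phi_vn F n _ _ _ (by omega) h1]
    rw [if_neg (by simp), if_pos (by simp), if_pos (by simp)]
    abel
  · intro kk _ hkk
    simp only [Finset.mem_insert, Finset.mem_singleton] at hkk
    push_neg at hkk
    have : trip F n a kk = 0 := by
      rw [trip, if_neg, if_neg, if_neg]
      · intro hv; exact hkk.2.2 (Fin.ext hv)
      · intro hv; exact hkk.2.1 (Fin.ext hv)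
      · intro hv; exact hkk.1 (Fin.ext hv)
    rw [this, map_zero]

noncomputable def chain (m off : ℕ) : Fin n → V F n :=
  ∑ t ∈ Finset.range m, trip F n (off + 2*t)

lemma chain_ker (m off : ℕ) (h : off + 2*m < n) : Phi F n (chain F n m off) = 0 := by
  rw [chain, map_sum]
  apply Finset.sum_eq_zero
  intro t ht
  exact trip_ker F n _ (by have := Finset.mem_range.mp ht; omega)

lemma trip_eval (a : ℕ) (h : a + 2 < n) (s : Fin n) (q : VIdx n) :
    trip F n a s q =
      (if s.val = a ∧ (q.1.1 : ℕ) = a+2 ∧ (q.1.2 : ℕ) = a+1 then 1 else 0)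
      - (if s.val = a+1 ∧ (q.1.1 : ℕ) = a+2 ∧ (q.1.2 : ℕ) = a then 1 else 0)
      + (if s.val = a+2 ∧ (q.1.1 : ℕ) = a+1 ∧ (q.1.2 : ℕ) = a then 1 else 0) := by
  rw [trip]
  by_cases h1 : s.val = a
  · rw [if_pos h1, vn_eval]
    split_ifs <;> first | omega | norm_num
  · rw [if_neg h1]
    by_cases h2 : s.val = a + 1
    · rw [if_pos h2, show (-vn F n (a+2) a) q = -(vn F n (a+2) a q) from rfl, vn_eval]
      split_ifs <;> first | omega | norm_num
    · rw [if_neg h2]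
      by_cases h3 : s.val = a + 2
      · rw [if_pos h3, vn_eval]
        split_ifs <;> first | omega | norm_num
      · rw [if_neg h3]
        show (0:F) = _
        split_ifs <;> first | omega | norm_num

lemma sum_ite_unique (m : ℕ) (P : ℕ → Prop) [DecidablePred P] (Q : Prop) [Decidable Q] (t0 : ℕ)
    (h1 : Q → t0 < m ∧ P t0) (h2 : ∀ t, t < m → P t → Q ∧ t = t0) :
    (∑ t ∈ Finset.range m, if P t then (1:F) else 0) = if Q then 1 else 0 := by
  split_ifs with hq
  · rw [Finset.sum_eq_single t0]
    · rw [if_pos (h1 hq).2]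
    · intro t ht hne
      rw [if_neg]
      intro hp; exact hne (h2 t (Finset.mem_range.mp ht) hp).2
    · intro habs; exact absurd (Finset.mem_range.mpr (h1 hq).1) habs
  · apply Finset.sum_eq_zero
    intro t ht
    rw [if_neg]
    intro hp; exact hq (h2 t (Finset.mem_range.mp ht) hp).1

lemma chain_eval (m off : ℕ) (h : off + 2*m < n) (s : Fin n) (q : VIdx n) :
    chain F n m off s q =
      (if off ≤ s.val ∧ s.val + 2 ≤ off + 2*m ∧ (s.val - off) % 2 = 0
          ∧ (q.1.1 : ℕ) = s.val+2 ∧ (q.1.2 : ℕ) = s.val+1 then 1 else 0)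
      - (if off + 1 ≤ s.val ∧ s.val + 1 ≤ off + 2*m ∧ (s.val - off) % 2 = 1
          ∧ (q.1.1 : ℕ) = s.val+1 ∧ (q.1.2 : ℕ) = s.val-1 then 1 else 0)
      + (if off + 2 ≤ s.val ∧ s.val ≤ off + 2*m ∧ (s.val - off) % 2 = 0
          ∧ (q.1.1 : ℕ) = s.val-1 ∧ (q.1.2 : ℕ) = s.val-2 then 1 else 0) := by
  have e0 : chain F n m off s q = ∑ t ∈ Finset.range m, trip F n (off + 2*t) s q := by
    rw [chain, Finset.sum_apply, Finset.sum_apply]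
  rw [e0, Finset.sum_congr rfl (fun t ht => trip_eval F n (off + 2*t)
    (by have := Finset.mem_range.mp ht; omega) s q)]
  rw [Finset.sum_add_distrib, Finset.sum_sub_distrib]
  congr 1
  · congr 1
    · exact sum_ite_unique F m _ _ ((s.val - off)/2) (by omega) (by omega)
    · exact sum_ite_unique F m _ _ ((s.val - off)/2) (by omega) (by omega)
  · exact sum_ite_unique F m _ _ ((s.val - off)/2 - 1) (by omega) (by omega)

lemma indep_of_eval {K : Type*} [Field K] {η ι : Type*} [Fintype ι] [DecidableEq ι]
    (y : ι → η → K) (c : ι → η) (d : ι → K) (hd : ∀ i, d i ≠ 0)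
    (h : ∀ i j, y j (c i) = if j = i then d i else 0) : LinearIndependent K y := by
  rw [linearIndependent_iff']
  intro t g hg i hi
  have hv := congrFun hg (c i)
  rw [Finset.sum_apply] at hv
  simp only [Pi.smul_apply, h, smul_eq_mul, mul_ite, mul_zero, Pi.zero_apply] at hv
  rw [Finset.sum_ite_eq' t i (fun j => g j * d i), if_pos hi] at hv
  exact (mul_eq_zero.mp hv).resolve_right (hd i)

lemma span_range_eq {K : Type*} [Field K] {η : Type*} {k n : ℕ} (hkn : k ≤ n)
    (x : Fin n → η → K) (y : Fin k → η → K)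
    (h1 : ∀ s : Fin k, x (Fin.castLE hkn s) = y s)
    (h0 : ∀ t : Fin n, k ≤ t.val → x t = 0) :
    span K (Set.range x) = span K (Set.range y) := by
  apply le_antisymm
  · rw [span_le]
    rintro _ ⟨t, rfl⟩
    by_cases ht : t.val < k
    · have e : x t = y ⟨t.val, ht⟩ := by
        rw [← h1]; congr 1
      rw [e]; exact subset_span ⟨_, rfl⟩
    · rw [h0 t (by omega)]; exact zero_mem _
  · rw [span_le]
    rintro _ ⟨s, rfl⟩
    rw [← h1]
    exact subset_span ⟨_, rfl⟩

set_option maxHeartbeats 1000000 in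
lemma even_eval {K : Type*} [Field K] {n k m : ℕ} (hm : k = 2*m) (hm3 : 3 ≤ m) (hkn : k ≤ n)
    (hn1 : 0 + 2*1 < n) (hn2 : 3 + 2*(m-2) < n) (s s' : Fin k) (q : VIdx n)
    (hq1 : (q.1.1 : ℕ) = if s.val = 0 then 2 else if s.val = 1 then 2 else if s.val = 2 then 1
      else if s.val = 3 then 5 else if s.val % 2 = 0 then s.val + 1 else s.val - 1)
    (hq2 : (q.1.2 : ℕ) = if s.val = 0 then 1 else if s.val = 1 then 0 else if s.val = 2 then 0
      else if s.val = 3 then 4 else if s.val % 2 = 0 then s.val - 1 else s.val - 2) :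
    (chain K n 1 0 + chain K n (m-2) 3) (Fin.castLE hkn s') q
      = if s' = s then (if s.val = 1 ∨ (4 ≤ s.val ∧ s.val % 2 = 0) then (-1 : K) else 1) else 0 := by
  have hs := s.2; have hs' := s'.2
  have hq : (s.val = 0 → (q.1.1 : ℕ) = 2 ∧ (q.1.2 : ℕ) = 1)
      ∧ (s.val = 1 → (q.1.1 : ℕ) = 2 ∧ (q.1.2 : ℕ) = 0)
      ∧ (s.val = 2 → (q.1.1 : ℕ) = 1 ∧ (q.1.2 : ℕ) = 0)
      ∧ (s.val = 3 → (q.1.1 : ℕ) = 5 ∧ (q.1.2 : ℕ) = 4)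
      ∧ (4 ≤ s.val ∧ s.val % 2 = 0 → (q.1.1 : ℕ) = s.val + 1 ∧ (q.1.2 : ℕ) = s.val - 1)
      ∧ (5 ≤ s.val ∧ s.val % 2 = 1 → (q.1.1 : ℕ) = s.val - 1 ∧ (q.1.2 : ℕ) = s.val - 2) := by
    refine ⟨?_, ?_, ?_, ?_, ?_, ?_⟩ <;>
      (intro h; rw [hq1, hq2]; split_ifs <;> first | exact ⟨rfl, rfl⟩ | omega)
  clear hq1 hq2
  rw [Pi.add_apply, Pi.add_apply, chain_eval K n 1 0 hn1, chain_eval K n (m-2) 3 hn2]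
  simp only [Fin.coe_castLE, Fin.ext_iff]
  rw [show (if 0 ≤ s'.val ∧ s'.val + 2 ≤ 0 + 2 * 1 ∧ (s'.val - 0) % 2 = 0
        ∧ (q.1.1 : ℕ) = s'.val + 2 ∧ (q.1.2 : ℕ) = s'.val + 1 then (1:K) else 0)
      = (if s'.val = s.val ∧ s.val = 0 then 1 else 0) from by
        split_ifs <;> first | rfl | omega]
  rw [show (if 0 + 1 ≤ s'.val ∧ s'.val + 1 ≤ 0 + 2 * 1 ∧ (s'.val - 0) % 2 = 1
        ∧ (q.1.1 : ℕ) = s'.val + 1 ∧ (q.1.2 : ℕ) = s'.val - 1 then (1:K) else 0)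
      = (if s'.val = s.val ∧ s.val = 1 then 1 else 0) from by
        split_ifs <;> first | rfl | omega]
  rw [show (if 0 + 2 ≤ s'.val ∧ s'.val ≤ 0 + 2 * 1 ∧ (s'.val - 0) % 2 = 0
        ∧ (q.1.1 : ℕ) = s'.val - 1 ∧ (q.1.2 : ℕ) = s'.val - 2 then (1:K) else 0)
      = (if s'.val = s.val ∧ s.val = 2 then 1 else 0) from by
        split_ifs <;> first | rfl | omega]
  rw [show (if 3 ≤ s'.val ∧ s'.val + 2 ≤ 3 + 2 * (m - 2) ∧ (s'.val - 3) % 2 = 0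
        ∧ (q.1.1 : ℕ) = s'.val + 2 ∧ (q.1.2 : ℕ) = s'.val + 1 then (1:K) else 0)
      = (if s'.val = s.val ∧ s.val = 3 then 1 else 0) from by
        split_ifs <;> first | rfl | omega]
  rw [show (if 3 + 1 ≤ s'.val ∧ s'.val + 1 ≤ 3 + 2 * (m - 2) ∧ (s'.val - 3) % 2 = 1
        ∧ (q.1.1 : ℕ) = s'.val + 1 ∧ (q.1.2 : ℕ) = s'.val - 1 then (1:K) else 0)
      = (if s'.val = s.val ∧ 4 ≤ s.val ∧ s.val % 2 = 0 then 1 else 0) from by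
        split_ifs <;> first | rfl | omega]
  rw [show (if 3 + 2 ≤ s'.val ∧ s'.val ≤ 3 + 2 * (m - 2) ∧ (s'.val - 3) % 2 = 0
        ∧ (q.1.1 : ℕ) = s'.val - 1 ∧ (q.1.2 : ℕ) = s'.val - 2 then (1:K) else 0)
      = (if s'.val = s.val ∧ 5 ≤ s.val ∧ s.val % 2 = 1 then 1 else 0) from by
        split_ifs <;> first | rfl | omega]
  clear hq
  split_ifs <;> first | omega | norm_num

set_option maxHeartbeats 1000000 in
lemma odd_eval {K : Type*} [Field K] {n k m : ℕ} (hm : k = 2*m + 1) (hm1 : 1 ≤ m) (hkn : k ≤ n)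
    (hn : 0 + 2*m < n) (s s' : Fin k) (q : VIdx n)
    (hq1 : (q.1.1 : ℕ) = if s.val = 0 then 2 else if s.val % 2 = 1 then s.val + 1 else s.val - 1)
    (hq2 : (q.1.2 : ℕ) = if s.val = 0 then 1 else if s.val % 2 = 1 then s.val - 1 else s.val - 2) :
    chain K n m 0 (Fin.castLE hkn s') q
      = if s' = s then (if s.val % 2 = 1 then (-1 : K) else 1) else 0 := by
  have hs := s.2; have hs' := s'.2
  have hq : (s.val = 0 → (q.1.1 : ℕ) = 2 ∧ (q.1.2 : ℕ) = 1)
      ∧ (s.val % 2 = 1 → (q.1.1 : ℕ) = s.val + 1 ∧ (q.1.2 : ℕ) = s.val - 1)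
      ∧ (1 ≤ s.val ∧ s.val % 2 = 0 → (q.1.1 : ℕ) = s.val - 1 ∧ (q.1.2 : ℕ) = s.val - 2) := by
    refine ⟨?_, ?_, ?_⟩ <;>
      (intro h; rw [hq1, hq2]; split_ifs <;> first | exact ⟨rfl, rfl⟩ | omega)
  clear hq1 hq2
  rw [chain_eval K n m 0 hn]
  simp only [Fin.coe_castLE, Fin.ext_iff]
  rw [show (if 0 ≤ s'.val ∧ s'.val + 2 ≤ 0 + 2 * m ∧ (s'.val - 0) % 2 = 0
        ∧ (q.1.1 : ℕ) = s'.val + 2 ∧ (q.1.2 : ℕ) = s'.val + 1 then (1:K) else 0)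
      = (if s'.val = s.val ∧ s.val = 0 then 1 else 0) from by
        split_ifs <;> first | rfl | omega]
  rw [show (if 0 + 1 ≤ s'.val ∧ s'.val + 1 ≤ 0 + 2 * m ∧ (s'.val - 0) % 2 = 1
        ∧ (q.1.1 : ℕ) = s'.val + 1 ∧ (q.1.2 : ℕ) = s'.val - 1 then (1:K) else 0)
      = (if s'.val = s.val ∧ s.val % 2 = 1 then 1 else 0) from by
        split_ifs <;> first | rfl | omega]
  rw [show (if 0 + 2 ≤ s'.val ∧ s'.val ≤ 0 + 2 * m ∧ (s'.val - 0) % 2 = 0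
        ∧ (q.1.1 : ℕ) = s'.val - 1 ∧ (q.1.2 : ℕ) = s'.val - 2 then (1:K) else 0)
      = (if s'.val = s.val ∧ 2 ≤ s.val ∧ s.val % 2 = 0 then 1 else 0) from by
        split_ifs <;> first | rfl | omega]
  clear hq
  split_ifs <;> first | omega | norm_num

lemma indep_of_eval' {K : Type*} [Field K] {n k : ℕ} (hkn : k ≤ n) (x : Fin n → V K n)
    (c1 c2 : Fin k → ℕ) (hc1 : ∀ s, c1 s < n) (hc2 : ∀ s, c2 s < c1 s)
    (d : Fin k → K) (hd : ∀ s, d s ≠ 0)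
    (h : ∀ (s s' : Fin k) (q : VIdx n), (q.1.1 : ℕ) = c1 s → (q.1.2 : ℕ) = c2 s →
      x (Fin.castLE hkn s') q = if s' = s then d s else 0) :
    LinearIndependent K (fun s : Fin k => x (Fin.castLE hkn s)) := by
  apply indep_of_eval _
    (fun s => (⟨(⟨c1 s, hc1 s⟩, ⟨c2 s, lt_trans (hc2 s) (hc1 s)⟩), hc2 s⟩ : VIdx n)) d hd
  intro i j
  exact h i j _ rfl rfl

set_option maxHeartbeats 1000000 in
/-- For every `k ≥ 3` with `k ≠ 4` (i.e. `k = 3ℓ` or `3ℓ+2` with `ℓ ≥ 1`, or `k = 3ℓ+1`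
with `ℓ ≥ 2`) and every `n ≥ k`, there is an element of `ker(Φ_n)` whose components span
a subspace of `V(n)` of dimension exactly `k`. -/
theorem statement9 (p : ℕ) [Fact p.Prime] (hp2 : p ≠ 2) (k n : ℕ)
    (hk3 : 3 ≤ k) (hk4 : k ≠ 4) (hkn : k ≤ n) :
    ∃ x : Fin n → V (ZMod p) n, Phi (ZMod p) n x = 0 ∧
      Module.finrank (ZMod p) ↥(Submodule.span (ZMod p) (Set.range x)) = k := by
  by_cases hodd : k % 2 = 1
  · obtain ⟨m, hm⟩ : ∃ m, k = 2*m + 1 := ⟨k/2, by omega⟩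
    have hm1 : 1 ≤ m := by omega
    have hn : 0 + 2*m < n := by omega
    refine ⟨chain (ZMod p) n m 0, chain_ker (ZMod p) n m 0 hn, ?_⟩
    have hli : LinearIndependent (ZMod p)
        (fun s : Fin k => chain (ZMod p) n m 0 (Fin.castLE hkn s)) := by
      apply indep_of_eval' hkn _
        (fun s : Fin k => if s.val = 0 then 2 else if s.val % 2 = 1 then s.val + 1 else s.val - 1)
        (fun s : Fin k => if s.val = 0 then 1 else if s.val % 2 = 1 then s.val - 1 else s.val - 2)
        (fun s => by have := s.2; beta_reduce; split_ifs <;> omega)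
        (fun s => by have := s.2; beta_reduce; split_ifs <;> omega)
        (fun s : Fin k => if s.val % 2 = 1 then (-1 : ZMod p) else 1)
      · intro s
        split_ifs
        · exact neg_ne_zero.mpr one_ne_zero
        · exact one_ne_zero
      · intro s s' q hq1 hq2
        exact odd_eval hm hm1 hkn hn s s' q hq1 hq2
    rw [span_range_eq hkn _ _ (fun s => rfl) (fun t ht => by
      funext q
      rw [chain_eval (ZMod p) n m 0 hn]
      split_ifs <;> first | omega | norm_num)]
    rw [finrank_span_eq_card hli, Fintype.card_fin]
  · obtain ⟨m, hm⟩ : ∃ m, k = 2*m := ⟨k/2, by omega⟩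
    have hm3 : 3 ≤ m := by omega
    have hn1 : 0 + 2*1 < n := by omega
    have hn2 : 3 + 2*(m-2) < n := by omega
    refine ⟨chain (ZMod p) n 1 0 + chain (ZMod p) n (m-2) 3, ?_, ?_⟩
    · rw [map_add, chain_ker (ZMod p) n 1 0 hn1, chain_ker (ZMod p) n (m-2) 3 hn2, add_zero]
    have hli : LinearIndependent (ZMod p)
        (fun s : Fin k => (chain (ZMod p) n 1 0 + chain (ZMod p) n (m-2) 3)
          (Fin.castLE hkn s)) := by
      apply indep_of_eval' hkn _
        (fun s : Fin k => if s.val = 0 then 2 else if s.val = 1 then 2 else if s.val = 2 then 1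
          else if s.val = 3 then 5 else if s.val % 2 = 0 then s.val + 1 else s.val - 1)
        (fun s : Fin k => if s.val = 0 then 1 else if s.val = 1 then 0 else if s.val = 2 then 0
          else if s.val = 3 then 4 else if s.val % 2 = 0 then s.val - 1 else s.val - 2)
        (fun s => by have := s.2; beta_reduce; split_ifs <;> omega)
        (fun s => by have := s.2; beta_reduce; split_ifs <;> omega)
        (fun s : Fin k => if s.val = 1 ∨ (4 ≤ s.val ∧ s.val % 2 = 0) then (-1 : ZMod p) else 1)
      · intro s
        split_ifs
        · exact neg_ne_zero.mpr one_ne_zero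
        · exact one_ne_zero
      · intro s s' q hq1 hq2
        exact even_eval hm hm3 hkn hn1 hn2 s s' q hq1 hq2
    rw [span_range_eq hkn _ _ (fun s => rfl) (fun t ht => by
      funext q
      show chain (ZMod p) n 1 0 t q + chain (ZMod p) n (m-2) 3 t q = 0
      rw [chain_eval (ZMod p) n 1 0 hn1, chain_eval (ZMod p) n (m-2) 3 hn2]
      split_ifs <;> first | omega | norm_num)]
    rw [finrank_span_eq_card hli, Fintype.card_fin]
end

section
/- Fix n > 1, let X be a subspace of V(n), fix i₀ with 1 ≤ i₀ ≤ n − 2, and set Z := X ∩ φ_{i₀}⁻¹(span(φ_{i₀+1}(X) ∪ ⋯ ∪ φ_n(X))). If d := dim(X ∩ span{v[j,i] : i₀ ≤ i < j ≤ n}), then dim(Z) ≤ r(d); equivalently, dim(Z) ≤ d − ⌈(√(8d+1) − 1)/2⌉, where ⌈x⌉ denotes the smallest integer greater than or equal to x. -/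
open Submodule

variable (F : Type*) [Field F] (n : ℕ)

/-- `Z = X ∩ φ_{i₀}⁻¹(span(φ_{i₀+1}(X) ∪ ⋯ ∪ φ_n(X)))`. -/
noncomputable def Zsub (X : Submodule F (V F n)) (i : Fin n) : Submodule F (V F n) :=
  X ⊓ Submodule.comap (phi F n i)
    (⨆ j : Fin n, ⨆ _ : i < j, Submodule.map (phi F n j) X)

/-- `X ∩ span{v[s,r] : m ≤ r < s ≤ n}` (indices written 0-based, `m : ℕ`). -/
noncomputable def Dsub (X : Submodule F (V F n)) (m : ℕ) : Submodule F (V F n) :=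
  X ⊓ Submodule.span F
    {x : V F n | ∃ s r : Fin n, m ≤ (r : ℕ) ∧ r < s ∧ x = v F n s r}

/-- `r(d)`: the largest integer `r` with `r ≤ d` and `r ≤ C(d − r, 2)`. -/
def rfun (d : ℕ) : ℕ :=
  Nat.findGreatest (fun r => r ≤ d ∧ r ≤ (d - r).choose 2) d

/-!
An element `z ∈ Z` vanishes on the coordinates `v[j,i]` with `i ≤ i₀`: read off the coordinate
`w[j,i,i₀]` of `φ_{i₀}(z)`, to which `φ_k(X)` contributes nothing for `k > i₀`. Writing
`φ_{i₀}(z) = Σ_{k > i₀} φ_k(x_k)` with `x_k ∈ X` and reading off the coordinates `w[β,a,κ]`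
(`a < i₀`) and `w[β,i₀,κ]` shows that `x_κ` lies in `D = X ∩ span{v[j,i] : i ≥ i₀}` and that its
`i₀`-th column is the `κ`-th column of the alternating matrix of `z`. With `U` the space of these
`i₀`-th columns, `dim Z + dim U ≤ dim D`, since `Z` lies in the kernel of `D → U`.

An alternating matrix `A` with all columns in `U` is recovered from `G A Gᵀ`, where `G` is any
matrix injective on `U` with `dim U` rows, and `G A Gᵀ` is again alternating. Hence
`dim Z ≤ C(dim U, 2) ≤ C(d - dim Z, 2)`.
-/

open Matrix

variable {F n}

def lowerMatrix : V F n →ₗ[F] Matrix (Fin n) (Fin n) F where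
  toFun x := Matrix.of fun β κ => if h : κ < β then x ⟨(β, κ), h⟩ else 0
  map_add' x y := by ext β κ; by_cases h : κ < β <;> simp [h]
  map_smul' c x := by ext β κ; by_cases h : κ < β <;> simp [h]

/-- Identifies `V(n)` with the alternating `n × n` matrices: `v[j,i] ↦ E_{ji} - E_{ij}`. -/
def altMatrix : V F n →ₗ[F] Matrix (Fin n) (Fin n) F :=
  lowerMatrix - (transposeLinearEquiv _ _ F F).toLinearMap ∘ₗ lowerMatrix

lemma altMatrix_apply (x : V F n) : altMatrix x = lowerMatrix x - (lowerMatrix x)ᵀ := rfl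

lemma altMatrix_apply_of_lt (x : V F n) (q : VIdx n) : altMatrix x q.1.1 q.1.2 = x q := by
  simp [altMatrix_apply, lowerMatrix, q.2, q.2.not_gt]

lemma altMatrix_injective : Function.Injective (altMatrix : V F n →ₗ[F] _) := by
  intro x y h
  ext q
  rw [← altMatrix_apply_of_lt x, ← altMatrix_apply_of_lt y, h]

lemma transpose_altMatrix (x : V F n) : (altMatrix x)ᵀ = -altMatrix x := by
  simp [altMatrix_apply]

lemma sub_transpose_mem_range_altMatrix {e : ℕ} (N : Matrix (Fin e) (Fin e) F) :
    N - Nᵀ ∈ LinearMap.range (altMatrix : V F e →ₗ[F] _) := by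
  refine ⟨fun q => N q.1.1 q.1.2 - N q.1.2 q.1.1, ?_⟩
  ext β κ
  rcases lt_trichotomy β κ with h | rfl | h
  · simp [altMatrix_apply, lowerMatrix, h, h.not_gt]
  · simp [altMatrix_apply, lowerMatrix]
  · simp [altMatrix_apply, lowerMatrix, h, h.not_gt]

lemma mul_altMatrix_mul_transpose_mem_range {e : ℕ} (G : Matrix (Fin e) (Fin n) F)
    (x : V F n) :
    G * altMatrix x * Gᵀ ∈ LinearMap.range (altMatrix : V F e →ₗ[F] _) := by
  convert sub_transpose_mem_range_altMatrix (G * lowerMatrix x * Gᵀ) using 1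
  simp [altMatrix_apply, Matrix.mul_sub, Matrix.sub_mul, transpose_mul, Matrix.mul_assoc]

lemma card_vIdx (e : ℕ) : Fintype.card (VIdx e) = e.choose 2 := by
  rw [← Fintype.card_fin e, ← Fintype.card_product_filter_lt, Fintype.card_fin,
    Fintype.card_subtype]
  exact Finset.card_equiv (Equiv.prodComm _ _) (by simp)

lemma finrank_range_altMatrix_le (e : ℕ) :
    Module.finrank F (LinearMap.range (altMatrix : V F e →ₗ[F] _)) ≤ e.choose 2 :=
  (LinearMap.finrank_range_le _).trans (by simp [card_vIdx])

lemma exists_matrix_mulVec_injOn {ι : Type*} [Fintype ι] [DecidableEq ι]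
    (U : Submodule F (ι → F)) :
    ∃ G : Matrix (Fin (Module.finrank F U)) ι F, ∀ u ∈ U, G *ᵥ u = 0 → u = 0 := by
  obtain ⟨f, hf⟩ := LinearMap.exists_leftInverse_of_injective U.subtype U.ker_subtype
  refine ⟨LinearMap.toMatrix' ((Module.finBasis F U).equivFun.toLinearMap ∘ₗ f), fun u hu h => ?_⟩
  rw [LinearMap.toMatrix'_mulVec, LinearMap.comp_apply, LinearEquiv.coe_coe,
    LinearEquiv.map_eq_zero_iff] at h
  have hfu : f u = ⟨u, hu⟩ := LinearMap.congr_fun hf ⟨u, hu⟩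
  simpa [h] using congr_arg Subtype.val hfu.symm

lemma eq_zero_of_mul_mul_transpose_eq_zero {ι κ : Type*} [Fintype ι] [Fintype κ]
    {U : Submodule F (ι → F)} {G : Matrix κ ι F} (hG : ∀ u ∈ U, G *ᵥ u = 0 → u = 0)
    {A : Matrix ι ι F} (hAU : LinearMap.range A.mulVecLin ≤ U) (hA : Aᵀ = -A)
    (h : G * A * Gᵀ = 0) : A = 0 := by
  have hU (y : ι → F) : A *ᵥ y ∈ U := hAU ⟨y, rfl⟩
  have hAG : A * Gᵀ = 0 := ext_iff_mulVec.2 fun y => by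
    rw [← mulVec_mulVec, zero_mulVec]
    exact hG _ (hU _) (by rw [mulVec_mulVec, mulVec_mulVec, h, zero_mulVec])
  have hGA : G * A = 0 := by
    simpa [transpose_mul, hA] using congr_arg transpose hAG
  exact ext_iff_mulVec.2 fun y => by
    rw [zero_mulVec]
    exact hG _ (hU y) (by rw [mulVec_mulVec, hGA, zero_mulVec])

theorem finrank_le_choose_of_range_le (U : Submodule F (Fin n → F)) (Z : Submodule F (V F n))
    (hZ : ∀ z ∈ Z, LinearMap.range (altMatrix z).mulVecLin ≤ U) :
    Module.finrank F Z ≤ (Module.finrank F U).choose 2 := by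
  obtain ⟨G, hG⟩ := exists_matrix_mulVec_injOn U
  let Θ : Z →ₗ[F] LinearMap.range (altMatrix : V F (Module.finrank F U) →ₗ[F] _) :=
    { toFun z := ⟨G * altMatrix (z : V F n) * Gᵀ, mul_altMatrix_mul_transpose_mem_range G z⟩
      map_add' x y := by ext1; simp [Matrix.mul_add, Matrix.add_mul]
      map_smul' c x := by ext1; simp }
  have hΘ : Function.Injective Θ := by
    refine (injective_iff_map_eq_zero Θ).2 fun z hz => ?_
    have h := eq_zero_of_mul_mul_transpose_eq_zero hG (hZ z z.2)
      (transpose_altMatrix (z : V F n)) (congr_arg Subtype.val hz)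
    exact Subtype.ext (altMatrix_injective (h.trans (map_zero _).symm))
  exact (LinearMap.finrank_le_finrank_of_injective hΘ).trans (finrank_range_altMatrix_le _)

lemma w_apply_mk (j i k : Fin n) {b a c : Fin n} (h : a < b ∧ a ≤ c) :
    w F n j i k ⟨(b, a, c), h⟩ = if b = j ∧ a = i ∧ c = k then 1 else 0 := by
  by_cases hbac : b = j ∧ a = i ∧ c = k
  · obtain ⟨rfl, rfl, rfl⟩ := hbac
    simp [w, h]
  · unfold w
    split_ifs <;> simp_all

/-- Only `v[b,a]` (through `w[b,a,k]`) and, when `a = k`, `v[b,c]` and `v[c,b]` (through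
`w[b,k,c]` and `w[c,k,b]`) contribute to this coordinate. -/
lemma phi_apply_mk (k : Fin n) (x : V F n) {b a c : Fin n} (h : a < b ∧ a ≤ c) :
    phi F n k x ⟨(b, a, c), h⟩ =
      (if c = k then x ⟨(b, a), h.1⟩ else 0) + (if a = k ∧ k < c then altMatrix x b c else 0) := by
  simp only [phi, Module.Basis.constr_apply_fintype, Pi.basisFun_equivFun, Finset.sum_apply,
    Pi.smul_apply, smul_eq_mul, ite_apply, Pi.sub_apply, w_apply_mk, LinearEquiv.refl_apply]
  obtain ⟨hab, hac⟩ := h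
  by_cases hck : c = k
  · subst hck
    rw [Finset.sum_eq_single ⟨(b, a), hab⟩]
    · simp [hac]
    · rintro ⟨⟨j, i⟩, hij⟩ - hq
      split_ifs <;> grind
    · simp
  by_cases hak : a = k ∧ k < c
  · obtain ⟨rfl, hac⟩ := hak
    rcases lt_trichotomy b c with hbc | rfl | hbc
    · rw [Finset.sum_eq_single ⟨(c, b), hbc⟩]
      · simp [altMatrix_apply, lowerMatrix, hbc, hbc.not_gt, hbc.ne, hab.not_ge, hck, hac]
      · rintro ⟨⟨j, i⟩, hij⟩ - hq
        split_ifs <;> grind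
      · simp
    · rw [Finset.sum_eq_zero fun q _ => by split_ifs <;> grind]
      simp [altMatrix_apply, hck]
    · rw [Finset.sum_eq_single ⟨(b, c), hbc⟩]
      · simp [altMatrix_apply, lowerMatrix, hbc, hbc.not_gt, hbc.ne', hac.not_ge, hck, hac]
      · rintro ⟨⟨j, i⟩, hij⟩ - hq
        split_ifs <;> grind
      · simp
  · rw [if_neg hck, if_neg hak, zero_add]
    refine Finset.sum_eq_zero fun q _ => ?_
    split_ifs <;> grind

def supportedFrom (m : ℕ) : Submodule F (V F n) where
  carrier := {x | ∀ q : VIdx n, (q.1.2 : ℕ) < m → x q = 0}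
  add_mem' hx hy q hq := by simp [hx q hq, hy q hq]
  zero_mem' _ _ := rfl
  smul_mem' c x hx q hq := by simp [hx q hq]

lemma span_v_eq_supportedFrom (m : ℕ) :
    span F {x : V F n | ∃ s r : Fin n, m ≤ (r : ℕ) ∧ r < s ∧ x = v F n s r} = supportedFrom m := by
  apply le_antisymm
  · rw [span_le]
    rintro _ ⟨s, r, hmr, hrs, rfl⟩ q hq
    have hqr : q ≠ ⟨(s, r), hrs⟩ := fun h => by subst h; exact absurd hq (not_lt.2 hmr)
    simp [v, hrs, hqr]
  · intro x hx
    rw [← Finset.univ_sum_single x]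
    refine sum_mem fun q _ => ?_
    by_cases hq : (q.1.2 : ℕ) < m
    · simp [hx q hq]
    · have hxq : Pi.single q (x q) = x q • v F n q.1.1 q.1.2 := by
        simp [v, q.2, ← Pi.single_smul]
      rw [hxq]
      exact smul_mem _ _ (subset_span ⟨q.1.1, q.1.2, not_lt.1 hq, q.2, rfl⟩)

lemma altMatrix_apply_eq_zero {m : ℕ} {z : V F n} (hz : z ∈ supportedFrom m) {β : Fin n}
    (hβ : (β : ℕ) < m) (κ : Fin n) : altMatrix z β κ = 0 := by
  have hκβ (h : κ < β) : z ⟨(β, κ), h⟩ = 0 := hz _ (lt_trans h hβ)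
  have hβκ (h : β < κ) : z ⟨(κ, β), h⟩ = 0 := hz _ hβ
  by_cases h : κ < β
  · simp [altMatrix_apply, lowerMatrix, h, h.not_gt, hκβ h]
  · by_cases h' : β < κ
    · simp [altMatrix_apply, lowerMatrix, h, h', hβκ h']
    · simp [altMatrix_apply, lowerMatrix, h, h']

lemma exists_Phi_eq_of_mem_iSup {X : Submodule F (V F n)} {i : Fin n} {y : W F n}
    (hy : y ∈ ⨆ j : Fin n, ⨆ _ : i < j, X.map (phi F n j)) :
    ∃ x : Fin n → V F n, (∀ j, i < j → x j ∈ X) ∧ (∀ j ≤ i, x j = 0) ∧ Phi F n x = y := by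
  let P : Submodule F (Fin n → V F n) := Submodule.pi Set.univ fun j => if i < j then X else ⊥
  have hle : (⨆ j : Fin n, ⨆ _ : i < j, X.map (phi F n j)) ≤ P.map (Phi F n) := by
    refine iSup₂_le fun j hj => ?_
    rintro _ ⟨x, hx, rfl⟩
    refine ⟨Pi.single j x, fun k _ => ?_, ?_⟩
    · by_cases hk : k = j
      · subst hk
        simp [hj, hx]
      · simp [hk]
    · rw [Phi, LinearMap.sum_apply, Finset.sum_eq_single j (fun k _ hk => by simp [hk]) (by simp)]
      simp
  obtain ⟨x, hx, rfl⟩ := hle hy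
  refine ⟨x, fun j hj => ?_, fun j hj => ?_, rfl⟩
  · simpa [hj] using hx j (Set.mem_univ j)
  · simpa [hj.not_gt] using hx j (Set.mem_univ j)

lemma Phi_apply_mk_of_le {i : Fin n} (x : Fin n → V F n) (hx : ∀ j ≤ i, x j = 0)
    {b a c : Fin n} (h : a < b ∧ a ≤ c) (ha : a ≤ i) :
    Phi F n x ⟨(b, a, c), h⟩ = x c ⟨(b, a), h.1⟩ := by
  rw [Phi, LinearMap.sum_apply, Finset.sum_apply]
  simp only [LinearMap.comp_apply, LinearMap.proj_apply, phi_apply_mk]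
  rw [Finset.sum_eq_single c]
  · simp
  · intro j _ hjc
    by_cases hj : j ≤ i
    · simp [hx j hj]
    · rw [if_neg (Ne.symm hjc), if_neg fun h : a = j ∧ j < c => hj (h.1 ▸ ha), add_zero]
  · simp

lemma Zsub_le_supportedFrom_succ (X : Submodule F (V F n)) (i : Fin n) :
    Zsub F n X i ≤ supportedFrom (i + 1) := by
  intro z hz q hq
  have hqi : q.1.2 ≤ i := Fin.le_def.2 (Nat.lt_succ_iff.1 hq)
  obtain ⟨x, -, hx0, hxz⟩ := exists_Phi_eq_of_mem_iSup hz.2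
  have h := congr_fun hxz ⟨(q.1.1, q.1.2, i), q.2, hqi⟩
  rw [Phi_apply_mk_of_le x hx0 _ hqi, phi_apply_mk, hx0 i le_rfl] at h
  simpa using h.symm

def colMap (i : Fin n) : V F n →ₗ[F] (Fin n → F) where
  toFun x β := if h : i < β then x ⟨(β, i), h⟩ else 0
  map_add' x y := by ext β; by_cases h : i < β <;> simp [h]
  map_smul' c x := by ext β; by_cases h : i < β <;> simp [h]

lemma supportedFrom_succ_le_ker_colMap (i : Fin n) :
    supportedFrom (i + 1) ≤ LinearMap.ker (colMap i : V F n →ₗ[F] _) := by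
  intro z hz
  ext β
  by_cases h : i < β
  · simp [colMap, h, hz ⟨(β, i), h⟩ (Nat.lt_succ_self i)]
  · simp [colMap, h]

lemma range_altMatrix_le_map_colMap {X : Submodule F (V F n)} {i : Fin n} {z : V F n}
    (hz : z ∈ Zsub F n X i) :
    LinearMap.range (altMatrix z).mulVecLin ≤ (X ⊓ supportedFrom i).map (colMap i) := by
  have hzs := Zsub_le_supportedFrom_succ X i hz
  rw [Matrix.range_mulVecLin, span_le]
  rintro _ ⟨κ, rfl⟩
  by_cases hκ : i < κ
  · obtain ⟨x, hxX, hx0, hxz⟩ := exists_Phi_eq_of_mem_iSup hz.2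
    refine ⟨x κ, ⟨hxX κ hκ, fun q hq => ?_⟩, funext fun β => ?_⟩
    · have h := congr_fun hxz ⟨(q.1.1, q.1.2, κ), q.2, (Fin.lt_def.2 hq).le.trans hκ.le⟩
      rw [Phi_apply_mk_of_le x hx0 _ (Fin.lt_def.2 hq).le, phi_apply_mk] at h
      simpa [hκ.ne', (Fin.lt_def.2 hq).ne] using h
    · by_cases hβ : i < β
      · have h := congr_fun hxz ⟨(β, i, κ), hβ, hκ.le⟩
        rw [Phi_apply_mk_of_le x hx0 _ le_rfl, phi_apply_mk] at h
        simpa [colMap, hβ, hκ, hκ.ne'] using h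
      · simp [colMap, hβ, altMatrix_apply_eq_zero hzs (Nat.lt_succ_of_le (not_lt.1 hβ))]
  · have hcol : (altMatrix z).col κ = 0 := funext fun β => by
      have h := congr_fun₂ (transpose_altMatrix z) κ β
      rwa [transpose_apply, neg_apply,
        altMatrix_apply_eq_zero hzs (Nat.lt_succ_of_le (not_lt.1 hκ)), neg_zero] at h
    rw [SetLike.mem_coe, hcol]
    exact zero_mem _

lemma finrank_map_add_finrank_le {K M N : Type*} [DivisionRing K] [AddCommGroup M] [Module K M]
    [AddCommGroup N] [Module K N] [FiniteDimensional K M] {D Z : Submodule K M} (f : M →ₗ[K] N)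
    (hZD : Z ≤ D) (hZf : Z ≤ LinearMap.ker f) :
    Module.finrank K (D.map f) + Module.finrank K Z ≤ Module.finrank K D := by
  have hrn := (f ∘ₗ D.subtype).finrank_range_add_finrank_ker
  rw [LinearMap.range_comp, Submodule.range_subtype] at hrn
  have hZ : Z.comap D.subtype ≤ LinearMap.ker (f ∘ₗ D.subtype) := fun z hz => hZf hz
  rw [← (Submodule.comapSubtypeEquivOfLe hZD).finrank_eq, ← hrn]
  exact Nat.add_le_add_left (Submodule.finrank_mono hZ) _

lemma le_sub_ceil_of_le_choose {d r : ℕ} (h : r ≤ (d - r).choose 2) (hrd : r ≤ d) :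
    (r : ℤ) ≤ d - ⌈(Real.sqrt (8 * (d : ℝ) + 1) - 1) / 2⌉ := by
  obtain ⟨s, rfl⟩ := Nat.exists_eq_add_of_le hrd
  rw [Nat.add_sub_cancel_left, Nat.choose_two_right] at h
  have h2 : 2 * (r + s) ≤ s * s + s := by
    rw [Nat.le_div_iff_mul_le two_pos] at h
    rcases s with _ | s
    · simp_all
    · simp only [Nat.add_sub_cancel] at h
      nlinarith
  have hsqrt : Real.sqrt (8 * ((r : ℝ) + s) + 1) ≤ 2 * s + 1 := by
    rw [Real.sqrt_le_left (by positivity)]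
    have : (2 * (r + s) : ℝ) ≤ s * s + s := by exact_mod_cast h2
    nlinarith
  have hceil : ⌈(Real.sqrt (8 * ((r : ℝ) + s) + 1) - 1) / 2⌉ ≤ s :=
    Int.ceil_le.2 (by push_cast; linarith)
  push_cast
  linarith

theorem statement13_general (p : ℕ) [Fact p.Prime] (n : ℕ)
    (X : Submodule (ZMod p) (V (ZMod p) n)) (i₀ : Fin n) :
    Module.finrank (ZMod p) ↥(Zsub (ZMod p) n X i₀) ≤
      rfun (Module.finrank (ZMod p) ↥(Dsub (ZMod p) n X (i₀ : ℕ))) ∧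
    (Module.finrank (ZMod p) ↥(Zsub (ZMod p) n X i₀) : ℤ) ≤
      (Module.finrank (ZMod p) ↥(Dsub (ZMod p) n X (i₀ : ℕ)) : ℤ) -
        ⌈(Real.sqrt (8 * (Module.finrank (ZMod p) ↥(Dsub (ZMod p) n X (i₀ : ℕ)) : ℝ) + 1)
            - 1) / 2⌉ := by
  have hZ := Zsub_le_supportedFrom_succ X i₀
  have hZD : Zsub (ZMod p) n X i₀ ≤ X ⊓ supportedFrom i₀ :=
    le_inf inf_le_left fun z hz q hq => hZ hz q (Nat.lt_succ_of_lt hq)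
  have hrank := finrank_map_add_finrank_le (colMap i₀) hZD
    (hZ.trans (supportedFrom_succ_le_ker_colMap i₀))
  have hchoose := finrank_le_choose_of_range_le _ (Zsub (ZMod p) n X i₀)
    fun z hz => range_altMatrix_le_map_colMap hz
  rw [Dsub, span_v_eq_supportedFrom]
  set r := Module.finrank (ZMod p) (Zsub (ZMod p) n X i₀)
  set d := Module.finrank (ZMod p) ↥(X ⊓ supportedFrom i₀)
  have hrd : r ≤ d := by omega
  have hr : r ≤ (d - r).choose 2 := hchoose.trans (Nat.choose_le_choose 2 (by omega))
  exact ⟨Nat.le_findGreatest hrd ⟨hrd, hr⟩, le_sub_ceil_of_le_choose hr hrd⟩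

/-- For `i₀` with `1 ≤ i₀ ≤ n − 2` (0-based: `i₀ + 3 ≤ n`), setting
`d = dim(X ∩ span{v[j,i] : i₀ ≤ i < j ≤ n})`, one has `dim Z ≤ r(d)`; equivalently,
`dim Z ≤ d − ⌈(√(8d+1) − 1)/2⌉`. -/
theorem statement13 (p : ℕ) [Fact p.Prime] (hp2 : p ≠ 2) (n : ℕ) (hn : 1 < n)
    (X : Submodule (ZMod p) (V (ZMod p) n)) (i₀ : Fin n) (hi₀ : (i₀ : ℕ) + 3 ≤ n) :
    Module.finrank (ZMod p) ↥(Zsub (ZMod p) n X i₀) ≤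
      rfun (Module.finrank (ZMod p) ↥(Dsub (ZMod p) n X (i₀ : ℕ))) ∧
    (Module.finrank (ZMod p) ↥(Zsub (ZMod p) n X i₀) : ℤ) ≤
      (Module.finrank (ZMod p) ↥(Dsub (ZMod p) n X (i₀ : ℕ)) : ℤ) -
        ⌈(Real.sqrt (8 * (Module.finrank (ZMod p) ↥(Dsub (ZMod p) n X (i₀ : ℕ)) : ℝ) + 1)
            - 1) / 2⌉ :=
  statement13_general p n X i₀
end
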